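/- arXiv:math/9201245 — 5 statements merged into one kernel-verified Lean document; each statement's English description precedes it below -/
import Mathlib

section
/- Let A be a finite set, and for g ≥ 1 and a positive integer F, let a = {B ⊆ A : |B| = g}. Define, for a nonempty family x ⊆ a, ‖x‖ = max{l : every subset A' ⊆ A with |A'| ≤ F^l is contained in some member of x}. Then ‖·‖ is an F-additive logarithmic measure on a, i.e., whenever x ⊆ a is covered by F sets x₁, …, x_F, some xᵢ has ‖xᵢ‖ ≥ ‖x‖ − 1. -/
/-!
If each of the `F` pieces `xᵢ` missed some subset `Aᵢ ⊆ A` with `|Aᵢ| ≤ F^(l-1)`, the union of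
the `Aᵢ` would be a subset of size at most `F^l` missed by every member of `x`; this pigeonhole
argument is the additivity. Monotonicity is clear for the level sets; the only work is the junk
value `sSup = 0` of unbounded sets of levels, which arise only when `F ≤ 1` or when `A` itself lies
in the family, and in both cases the smaller family also has measure `0`.
-/

open Finset

section

variable {α : Type*}

lemma Nat.bddAbove_of_sSup_ne_zero {s : Set ℕ} (h : sSup s ≠ 0) : BddAbove s := by
  by_contra hs
  exact h (Nat.sSup_of_not_bddAbove hs)

lemma Nat.sSup_mem_of_ne_zero {s : Set ℕ} (h : sSup s ≠ 0) : sSup s ∈ s := by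
  refine Nat.sSup_mem ?_ (Nat.bddAbove_of_sSup_ne_zero h)
  rw [Set.nonempty_iff_ne_empty]
  rintro rfl
  exact h csSup_empty

def CoversSubsetsUpTo (A : Finset α) (k : ℕ) (x : Finset (Finset α)) : Prop :=
  ∀ A' ⊆ A, A'.card ≤ k → ∃ B ∈ x, A' ⊆ B

-- The measure of the statement is `‖x‖ = sSup (coverLevels A F x)`.
def coverLevels (A : Finset α) (F : ℕ) (x : Finset (Finset α)) : Set ℕ :=
  {l | CoversSubsetsUpTo A (F ^ l) x}

variable {A : Finset α} {k m F : ℕ} {x y : Finset (Finset α)}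

namespace CoversSubsetsUpTo

lemma mono_family (h : CoversSubsetsUpTo A k x) (hxy : x ⊆ y) : CoversSubsetsUpTo A k y :=
  fun A' hA' hk => let ⟨B, hB, hA'B⟩ := h A' hA' hk; ⟨B, hxy hB, hA'B⟩

lemma mono_card (h : CoversSubsetsUpTo A k x) (hmk : m ≤ k) : CoversSubsetsUpTo A m x :=
  fun A' hA' hm => h A' hA' (hm.trans hmk)

lemma of_mem (hA : A ∈ x) : CoversSubsetsUpTo A k x :=
  fun _ hA' _ => ⟨A, hA, hA'⟩

lemma exists_superset (h : CoversSubsetsUpTo A A.card x) : ∃ B ∈ x, A ⊆ B :=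
  h A subset_rfl le_rfl

lemma exists_of_biUnion [DecidableEq α] {ι : Type*} [Fintype ι] {c : ι → Finset (Finset α)}
    (h : CoversSubsetsUpTo A (Fintype.card ι * m) (univ.biUnion c)) :
    ∃ i, CoversSubsetsUpTo A m (c i) := by
  by_contra! hc
  simp only [CoversSubsetsUpTo, not_forall, not_exists, not_and] at hc
  choose S hSA hSm hSc using hc
  obtain ⟨B, hB, hSB⟩ := h (univ.biUnion S) (biUnion_subset.2 fun i _ => hSA i)
    (card_biUnion_le_card_mul _ _ _ fun i _ => hSm i)
  obtain ⟨i, -, hBi⟩ := mem_biUnion.1 hB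
  exact hSc i B hBi ((subset_biUnion_of_mem S (mem_univ i)).trans hSB)

end CoversSubsetsUpTo

lemma coverLevels_mono (hxy : x ⊆ y) : coverLevels A F x ⊆ coverLevels A F y :=
  fun _ hl => CoversSubsetsUpTo.mono_family hl hxy

lemma coverLevels_eq_univ_of_mem (hA : A ∈ x) : coverLevels A F x = Set.univ :=
  Set.eq_univ_of_forall fun _ => CoversSubsetsUpTo.of_mem hA

lemma succ_mem_coverLevels {l : ℕ} (hF : F ≤ 1) (hl : l ∈ coverLevels A F x) :
    l + 1 ∈ coverLevels A F x :=
  CoversSubsetsUpTo.mono_card hl (by rw [pow_succ]; exact mul_le_of_le_one_right (Nat.zero_le _) hF)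

lemma sSup_coverLevels_eq_zero (hF : F ≤ 1) : sSup (coverLevels A F x) = 0 := by
  by_contra h
  exact (le_csSup (Nat.bddAbove_of_sSup_ne_zero h)
    (succ_mem_coverLevels hF (Nat.sSup_mem_of_ne_zero h))).not_gt (Nat.lt_succ_self _)

lemma exists_superset_of_not_bddAbove_coverLevels (hF : 2 ≤ F)
    (h : ¬BddAbove (coverLevels A F x)) : ∃ B ∈ x, A ⊆ B := by
  obtain ⟨l, hl, hlA⟩ := not_bddAbove_iff.1 h A.card
  exact (CoversSubsetsUpTo.mono_card hl (hlA.le.trans (Nat.lt_pow_self hF).le)).exists_superset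

theorem sSup_coverLevels_mono {g : ℕ} (hx : x.Nonempty) (hxy : x ⊆ y)
    (hy : y ⊆ A.powersetCard g) : sSup (coverLevels A F x) ≤ sSup (coverLevels A F y) := by
  rcases le_or_gt F 1 with hF | hF
  · rw [sSup_coverLevels_eq_zero hF]
    exact Nat.zero_le _
  by_cases hbdd : BddAbove (coverLevels A F y)
  · exact csSup_le_csSup' hbdd (coverLevels_mono hxy)
  obtain ⟨B, hBy, hAB⟩ := exists_superset_of_not_bddAbove_coverLevels hF hbdd
  obtain ⟨B₀, hB₀⟩ := hx
  have hB := mem_powersetCard.1 (hy hBy)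
  have hB₀' := mem_powersetCard.1 (hy (hxy hB₀))
  obtain rfl : B₀ = A :=
    eq_of_subset_of_card_le hB₀'.1 (by rw [hB₀'.2, ← hB.2]; exact card_le_card hAB)
  rw [Nat.sSup_of_not_bddAbove hbdd, coverLevels_eq_univ_of_mem hB₀,
    Nat.sSup_of_not_bddAbove not_bddAbove_univ]

theorem exists_sSup_coverLevels_sub_one_le [DecidableEq α] {ι : Type*} [Fintype ι]
    (c : ι → Finset (Finset α)) (hc : (univ.biUnion c).Nonempty) :
    ∃ i, sSup (coverLevels A (Fintype.card ι) (univ.biUnion c)) - 1 ≤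
      sSup (coverLevels A (Fintype.card ι) (c i)) := by
  set n := sSup (coverLevels A (Fintype.card ι) (univ.biUnion c))
  by_cases hn : n = 0
  · obtain ⟨B, hB⟩ := hc
    obtain ⟨i, -, -⟩ := mem_biUnion.1 hB
    exact ⟨i, by omega⟩
  have hmem : n - 1 + 1 ∈ coverLevels A (Fintype.card ι) (univ.biUnion c) := by
    rw [Nat.sub_add_cancel (Nat.pos_of_ne_zero hn)]
    exact Nat.sSup_mem_of_ne_zero hn
  obtain ⟨i, hi⟩ := CoversSubsetsUpTo.exists_of_biUnion (by rwa [← pow_succ'])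
  exact ⟨i, le_csSup ((Nat.bddAbove_of_sSup_ne_zero hn).mono
    (coverLevels_mono (subset_biUnion_of_mem c (mem_univ i)))) hi⟩

end

theorem stmt_3_general {α : Type*} [DecidableEq α] (A : Finset α) (g F : ℕ) :
    -- the family `a` of all `g`-element subsets of `A`
    letI a : Finset (Finset α) := A.powerset.filter (fun B => B.card = g)
    -- the logarithmic measure
    letI norm : Finset (Finset α) → ℕ := fun x =>
      sSup {l : ℕ | ∀ A' ⊆ A, A'.card ≤ F ^ l → ∃ B ∈ x, A' ⊆ B}
    (∀ x y : Finset (Finset α), x.Nonempty → x ⊆ y → y ⊆ a → norm x ≤ norm y) ∧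
    (∀ x : Finset (Finset α), x ⊆ a → x.Nonempty →
      ∀ c : Fin F → Finset (Finset α), x = Finset.univ.biUnion c →
        ∃ i, norm x - 1 ≤ norm (c i)) := by
  refine ⟨fun x y hx hxy hy => sSup_coverLevels_mono hx hxy (powersetCard_eq_filter ▸ hy), ?_⟩
  rintro x - hx c rfl
  have key := exists_sSup_coverLevels_sub_one_le (A := A) c hx
  rw [Fintype.card_fin] at key
  exact key

/-- Let `A` be a finite set, and for `g ≥ 1` and a positive integer `F`,
let `a = {B ⊆ A : |B| = g}`. Define, for a nonempty family `x ⊆ a`,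
`‖x‖ = max{l : every subset A' ⊆ A with |A'| ≤ F^l is contained in some member of x}`.
Then `‖·‖` is an `F`-additive logarithmic measure on `a`: it is monotone, and whenever
`x ⊆ a` is covered by `F` sets `x₁, …, x_F`, some `xᵢ` has `‖xᵢ‖ ≥ ‖x‖ − 1`. -/
theorem stmt_3 {α : Type*} [DecidableEq α] (A : Finset α) (g F : ℕ)
    (hg : 1 ≤ g) (hF : 1 ≤ F) :
    -- the family `a` of all `g`-element subsets of `A`
    letI a : Finset (Finset α) := A.powerset.filter (fun B => B.card = g)
    -- the logarithmic measure
    letI norm : Finset (Finset α) → ℕ := fun x =>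
      sSup {l : ℕ | ∀ A' ⊆ A, A'.card ≤ F ^ l → ∃ B ∈ x, A' ⊆ B}
    (∀ x y : Finset (Finset α), x.Nonempty → x ⊆ y → y ⊆ a → norm x ≤ norm y) ∧
    (∀ x : Finset (Finset α), x ⊆ a → x.Nonempty →
      ∀ c : Fin F → Finset (Finset α), x = Finset.univ.biUnion c →
        ∃ i, norm x - 1 ≤ norm (c i)) :=
  stmt_3_general A g F
end

section
/- Let Γ be a bipartite graph with parts U, V where V is the set of all finite subsets of U = ℕ and the edge relation is membership. Let (f_i)_{i<ω₁} be a family of functions ℕ → ℕ that is cofinal in (ℕ → ℕ) under eventual domination. Then for every nonprincipal ultrafilter F on ℕ, in the ultrapower Γ^ω/F there exist ω₁ elements of the U-part (namely the classes f_i/F) such that no single element of the V-part is linked to all of them. -/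
open Filter

/-- Let `Γ_∞` be the bipartite graph with parts `U = ℕ` and
`V = ` the finite subsets of `ℕ`, with the edge relation being membership.
Let `(f_i)_{i<ω₁}` be a family of functions `ℕ → ℕ` cofinal in `ℕ → ℕ` under eventual
domination. Then for every nonprincipal ultrafilter `F` on `ℕ`, the classes `f_i/F`
give `ω₁` elements of the `U`-part of the ultrapower `Γ_∞^ω/F` such that no single
element of the `V`-part (represented by a sequence `b` of finite sets) is linked to
all of them: for every `b` there is some `i` with `{n : f_i(n) ∈ b(n)} ∉ F`. -/
theorem stmt_5
    (f : {o : Ordinal // o < (Cardinal.aleph 1).ord} → ℕ → ℕ)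
    (hcof : ∀ g : ℕ → ℕ, ∃ i, ∀ᶠ n in atTop, g n < f i n)
    (F : Ultrafilter ℕ) (hF : (cofinite : Filter ℕ) ≤ ↑F)
    (b : ℕ → Finset ℕ) :
    ∃ i, {n : ℕ | f i n ∈ b n} ∉ F := by
  obtain ⟨i, hi⟩ := hcof (fun n => (b n).sup id)
  refine ⟨i, fun hmem => ?_⟩
  have hnot : ∀ᶠ n in atTop, f i n ∉ b n := by
    refine hi.mono fun n hn hm => ?_
    have := Finset.le_sup (f := id) hm
    simp only [id] at this
    omega
  rw [← Nat.cofinite_eq_atTop] at hnot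
  have hfin : ({n : ℕ | f i n ∈ b n} : Set ℕ).Finite := by
    have h := mem_cofinite.mp hnot
    convert h using 1
    ext n; simp
  have hcfin : ({n : ℕ | f i n ∈ b n}ᶜ : Set ℕ).Finite := by
    have := hF hmem
    rwa [mem_cofinite] at this
  exact Set.infinite_univ (α := ℕ)
    (by simpa [Set.union_compl_self] using hfin.union hcfin)
end

section
/- Suppose (k_n), (l_n) are sequences with l_n < k_n for all n and l_n → ∞. Let U_n be a set of size k_n and V_n the set of all l_n-element subsets of U_n, forming a bipartite graph Γ_n with membership as adjacency. Assume the following covering property (P1): for every sequence (A_n) of finite sets with |A_n| → ∞, every g : ℕ → ℕ with g(n) → ∞, and every ω₁-indexed family (f_i)_{i<ω₁} with f_i ∈ ∏_n A_n, there is H with H(n) ⊆ A_n, |H(n)| ≤ g(n), and for each i, f_i(n) ∈ H(n) for all sufficiently large n. Then for every ultrafilter F on ℕ, the ultraproduct ∏_n Γ_n / F is ℵ₁-complete: any ω₁ elements of the U-part are all linked to a single common element of the V-part. -/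
open Filter

universe u

lemma aleph_one_ord_lift :
    Ordinal.lift.{u, 0} (Cardinal.aleph 1).ord = (Cardinal.aleph 1).ord := by
  rw [Cardinal.lift_ord, Cardinal.lift_aleph, Ordinal.lift_one]

/-- The canonical map from the copy of `ω₁` in universe `0` to the copy in universe `u`. -/
def upOmega1 : {o : Ordinal.{0} // o < (Cardinal.aleph 1).ord} →
    {o : Ordinal.{u} // o < (Cardinal.aleph 1).ord} :=
  fun o => ⟨Ordinal.lift.{u, 0} o.1, by
    rw [← aleph_one_ord_lift.{u}]; exact Ordinal.lift_lt.mpr o.2⟩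

lemma upOmega1_injective : Function.Injective upOmega1.{u} := by
  intro x y h
  apply Subtype.ext
  exact Ordinal.lift_inj.mp (congrArg Subtype.val h)

lemma upOmega1_surjective : Function.Surjective upOmega1.{u} := by
  intro b
  have hb : b.1 ≤ Ordinal.lift.{u, 0} (Cardinal.aleph 1).ord := by
    rw [aleph_one_ord_lift.{u}]; exact b.2.le
  obtain ⟨o, ho⟩ := Ordinal.mem_range_lift_of_le hb
  refine ⟨⟨o, ?_⟩, Subtype.ext ho⟩
  rw [← Ordinal.lift_lt.{u}, ho, aleph_one_ord_lift.{u}]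
  exact b.2

/-- Suppose `l n < k n` for all `n` and `l n → ∞`. Let `Γ_n` be the
bipartite graph with `U`-part `Fin (k n)` and `V`-part the `l n`-element subsets of
`Fin (k n)`, adjacency being membership. Assume the covering property (P1). Then for
every ultrafilter `F` on `ℕ`, the ultraproduct `∏ Γ_n / F` is ℵ₁-complete: any `ω₁`
(pairwise distinct modulo `F`) elements of the `U`-part are all linked to a single
common element of the `V`-part. -/
theorem stmt_6 (k l : ℕ → ℕ) (hlk : ∀ n, l n < k n)
    (hl : Tendsto l atTop atTop)
    -- (P1):
    (P1 : ∀ A : ℕ → Finset ℕ, Tendsto (fun n => (A n).card) atTop atTop →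
      ∀ g : ℕ → ℕ, Tendsto g atTop atTop →
      ∀ f : {o : Ordinal // o < (Cardinal.aleph 1).ord} → ℕ → ℕ,
        (∀ i n, f i n ∈ A n) →
        ∃ H : ℕ → Finset ℕ, (∀ n, H n ⊆ A n) ∧ (∀ n, (H n).card ≤ g n) ∧
          ∀ i, ∀ᶠ n in atTop, f i n ∈ H n)
    (F : Ultrafilter ℕ)
    -- `ω₁` elements of the `U`-part of the ultraproduct:
    (a : {o : Ordinal // o < (Cardinal.aleph 1).ord} → (n : ℕ) → Fin (k n))
    (hdist : ∀ i j, i ≠ j → {n : ℕ | a i n = a j n} ∉ F) :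
    ∃ b : (n : ℕ) → Finset (Fin (k n)), (∀ n, (b n).card = l n) ∧
      ∀ i, {n : ℕ | a i n ∈ b n} ∈ F := by
  -- The index type has at least ℵ₀ elements.
  have hinf : Infinite {o : Ordinal // o < (Cardinal.aleph 1).ord} := by
    refine Infinite.of_injective (fun n : ℕ => ⟨(n : Ordinal), ?_⟩) ?_
    · exact lt_of_lt_of_le (Ordinal.nat_lt_omega0 n)
        (by rw [← Cardinal.ord_aleph0]
            exact Cardinal.ord_le_ord.mpr (le_of_lt Cardinal.aleph0_lt_aleph_one))
    · intro m n h
      simpa using congrArg Subtype.val h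
  rcases F.le_cofinite_or_eq_pure with hF | ⟨m, hm⟩
  · -- Nonprincipal case: use (P1).
    -- Transfer indices between the two universe copies of `ω₁`.
    let ψ := upOmega1 ∘ Function.surjInv upOmega1_surjective
    have hψ : Function.Surjective ψ := by
      intro i
      obtain ⟨o, ho⟩ := upOmega1_surjective i
      exact ⟨upOmega1 o, by
        simp only [ψ, Function.comp_apply,
          upOmega1_injective (Function.surjInv_eq upOmega1_surjective _), ho]⟩
    have hk : Tendsto (fun n => (Finset.range (k n)).card) atTop atTop := by
      simpa using (tendsto_atTop_mono (fun n => (hlk n).le)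
        (hl.comp tendsto_id)).congr (fun n => rfl)
    obtain ⟨H, hHsub, hHcard, hHmem⟩ := P1 (fun n => Finset.range (k n)) hk l hl
      (fun j n => (a (ψ j) n : ℕ)) (fun j n => Finset.mem_range.mpr (a (ψ j) n).2)
    have hlt : ∀ n, ∀ x ∈ H n, x < k n := fun n x hx =>
      Finset.mem_range.mp (hHsub n hx)
    choose b hb hbcard using fun n =>
      Finset.exists_superset_card_eq (s := (H n).attachFin (hlt n)) (n := l n)
        (le_trans (le_of_eq (Finset.card_attachFin _ _)) (hHcard n))
        (by simpa using (hlk n).le)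
    refine ⟨b, hbcard, fun i => ?_⟩
    obtain ⟨j, rfl⟩ := hψ i
    have hev := hHmem j
    rw [← Nat.cofinite_eq_atTop] at hev
    have hmemF : {n | (a (ψ j) n : ℕ) ∈ H n} ∈ F := hF hev
    exact F.1.sets_of_superset hmemF (fun n hn =>
      hb n ((Finset.mem_attachFin _).mpr hn))
  · -- Principal case: contradiction with `hdist` by pigeonhole.
    exfalso
    obtain ⟨i, j, hij, hval⟩ :=
      Finite.exists_ne_map_eq_of_infinite (fun i => a i m)
    apply hdist i j hij
    rw [hm]
    simpa using hval
end

section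
/- Let (k_n), (l_n) be sequences with l_n → ∞ and k_n/l_n → ∞, set f(n) = C(k_n, l_n) (binomial coefficient) and g(n) = k_n / l_n. Suppose the universe is (f,g)-bounded: for every sequence (A_n) with |A_n| = f(n) there exist ℵ₁ sequences B_i = (B_{i,n})_{n<ω} with B_{i,n} ⊆ A_n, |B_{i,n}| < g(n) for all large n, and ∏_n A_n = ⋃_i ∏_n B_{i,n}. Then for every ultrafilter F on ℕ the ultraproduct ∏_n Γ_{k_n, l_n} / F is not ℵ₁-complete. -/
/-!
If every `ω₁`-indexed family of `U`-elements had a common neighbour, take a `(f, g)`-bounded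
cover `(D_i)` of the sequences of `l n`-subsets of `Fin (k n)`, with `|D_{i,n}| < k n / l n`
eventually. For a nonprincipal `F`, the finite fact gives for each `i` a sequence of vertices
`a_i` avoiding every member of `D_{i,n}` for almost all `n`; a common neighbour `b` of the `a_i`
lies in some `D_i`, contradicting the choice of `a_i`. For `F = pure n₀`, a common neighbour
of an enumeration of `Fin (k n₀)` would be a set of size `l n₀ < k n₀` containing everything.
-/

open Filter Finset

universe u v

/-- Every `ι`-indexed family of elements of the `U`-part of `∏ n, Γ_{k n, l n} / F`, given by
representing sequences, has a common neighbour in the `V`-part. -/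
def HasCommonNeighbours (ι : Type*) (k l : ℕ → ℕ) (F : Ultrafilter ℕ) : Prop :=
  ∀ a : ι → (n : ℕ) → Fin (k n), ∃ b : (n : ℕ) → Finset (Fin (k n)),
    (∀ n, (b n).card = l n) ∧ ∀ i, {n : ℕ | a i n ∈ b n} ∈ F

/-- The covers by products in the definition of an `(f, g)`-bounded universe. -/
def IsSmallCover {ι : Type*} {β : ℕ → Type*} (A : (n : ℕ) → Finset (β n)) (g : ℕ → ℕ)
    (B : ι → (n : ℕ) → Finset (β n)) : Prop :=
  (∀ i n, B i n ⊆ A n) ∧ (∀ i, ∀ᶠ n in atTop, (B i n).card < g n) ∧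
    ∀ x : (n : ℕ) → β n, (∀ n, x n ∈ A n) → ∃ i, ∀ n, x n ∈ B i n

theorem IsSmallCover.preimage {ι : Type*} {β γ : ℕ → Type*} [∀ n, DecidableEq (γ n)]
    {A : (n : ℕ) → Finset (β n)} {g : ℕ → ℕ} (e : (n : ℕ) → β n ↪ γ n)
    {B : ι → (n : ℕ) → Finset (γ n)}
    (hB : IsSmallCover (fun n => (A n).map (e n)) g B) :
    IsSmallCover A g (fun i n => {x ∈ A n | e n x ∈ B i n}) := by
  obtain ⟨hsub, hsmall, hcover⟩ := hB
  refine ⟨fun i n => filter_subset _ _, fun i => ?_, fun x hx => ?_⟩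
  · filter_upwards [hsmall i] with n hn
    refine lt_of_le_of_lt ?_ hn
    rw [← card_map (e n)]
    exact card_le_card fun y hy => by
      obtain ⟨x, hx, rfl⟩ := mem_map.1 hy
      exact (mem_filter.1 hx).2
  · obtain ⟨i, hi⟩ := hcover (fun n => e n (x n)) fun n => mem_map_of_mem _ (hx n)
    exact ⟨i, fun n => mem_filter.2 ⟨hx n, hi n⟩⟩

theorem exists_forall_notMem_of_mul_card_lt {α : Type*} [Fintype α] {l : ℕ}
    (D : Finset (Finset α)) (hD : ∀ S ∈ D, S.card ≤ l) (hlt : l * D.card < Fintype.card α) :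
    ∃ m : α, ∀ S ∈ D, m ∉ S := by
  classical
  by_contra! h
  have hcover : (univ : Finset α) ⊆ D.biUnion id := fun m _ => by
    obtain ⟨S, hS, hm⟩ := h m
    exact mem_biUnion.2 ⟨S, hS, hm⟩
  have := (card_le_card hcover).trans (card_biUnion_le_card_mul D id l hD)
  rw [card_univ] at this
  linarith

theorem HasCommonNeighbours.of_surjective {ι ι' : Type*} {k l : ℕ → ℕ} {F : Ultrafilter ℕ}
    (h : HasCommonNeighbours ι k l F) {φ : ι → ι'} (hφ : φ.Surjective) :
    HasCommonNeighbours ι' k l F := fun a => by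
  obtain ⟨b, hb, hab⟩ := h (a ∘ φ)
  exact ⟨b, hb, hφ.forall.2 hab⟩

theorem not_hasCommonNeighbours_pure {ι : Type*} [Infinite ι] {k l : ℕ → ℕ}
    (hk : ∀ n, 0 < k n) {n₀ : ℕ} (hlk : l n₀ < k n₀) :
    ¬ HasCommonNeighbours ι k l (pure n₀) := fun h => by
  obtain ⟨s, hs⟩ : ∃ s : ι → ℕ, s.Surjective :=
    ⟨_, Function.invFun_surjective (Infinite.natEmbedding ι).injective⟩
  obtain ⟨b, hb, hab⟩ := h fun i n => ⟨s i % k n, Nat.mod_lt _ (hk n)⟩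
  have hall : (univ : Finset (Fin (k n₀))) ⊆ b n₀ := fun m _ => by
    obtain ⟨i, hi⟩ := hs m
    simpa [hi, Nat.mod_eq_of_lt m.2] using hab i
  have := card_le_card hall
  simp only [card_univ, Fintype.card_fin, hb] at this
  omega

theorem not_hasCommonNeighbours_of_le_cofinite {ι : Type*} {k l : ℕ → ℕ} (hk : ∀ n, 0 < k n)
    {F : Ultrafilter ℕ} (hF : (F : Filter ℕ) ≤ cofinite)
    {D : ι → (n : ℕ) → Finset (Finset (Fin (k n)))}
    (hD : IsSmallCover (fun n => powersetCard (l n) univ) (fun n => k n / l n) D) :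
    ¬ HasCommonNeighbours ι k l F := fun h => by
  obtain ⟨hsub, hsmall, hcover⟩ := hD
  have (n : ℕ) : Nonempty (Fin (k n)) := ⟨⟨0, hk n⟩⟩
  let avoid (i : ι) (n : ℕ) : Fin (k n) := Classical.epsilon fun m => ∀ S ∈ D i n, m ∉ S
  obtain ⟨b, hb, hab⟩ := h avoid
  obtain ⟨i, hi⟩ := hcover b fun n => mem_powersetCard.2 ⟨subset_univ _, hb n⟩
  have hsmall_F : ∀ᶠ n in (F : Filter ℕ), (D i n).card < k n / l n :=
    hF (Nat.cofinite_eq_atTop ▸ hsmall i)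
  obtain ⟨n, hn_mem, hn_small⟩ := ((F.eventually_iff.2 (hab i)).and hsmall_F).exists
  have hl : 0 < l n := Nat.pos_of_ne_zero fun h0 => by simp [h0] at hn_small
  have hlt : l n * (D i n).card < Fintype.card (Fin (k n)) := by
    have := (Nat.mul_le_mul_left (l n) hn_small).trans (Nat.mul_div_le (k n) (l n))
    rw [Fintype.card_fin]
    linarith
  have hcard (S : Finset (Fin (k n))) (hS : S ∈ D i n) : S.card ≤ l n :=
    (mem_powersetCard.1 (hsub i n hS)).2.le
  exact Classical.epsilon_spec (exists_forall_notMem_of_mul_card_lt _ hcard hlt) (b n) (hi n)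
    hn_mem

theorem mk_lt_ord_aleph_one : Cardinal.mk {o : Ordinal.{u} // o < (Cardinal.aleph 1).ord} =
    Cardinal.aleph 1 :=
  (Cardinal.mk_Iio_ordinal _).trans <| by
    rw [Cardinal.card_ord, Cardinal.lift_aleph, Ordinal.lift_one]

instance : Infinite {o : Ordinal.{u} // o < (Cardinal.aleph 1).ord} := by
  rw [Cardinal.infinite_iff, mk_lt_ord_aleph_one]
  exact Cardinal.aleph0_le_aleph 1

theorem nonempty_equiv_lt_ord_aleph_one :
    Nonempty ({o : Ordinal.{u} // o < (Cardinal.aleph 1).ord} ≃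
      {o : Ordinal.{v} // o < (Cardinal.aleph 1).ord}) :=
  Cardinal.lift_mk_eq'.1 <| by
    simp only [mk_lt_ord_aleph_one, Cardinal.lift_aleph, Ordinal.lift_one]

theorem stmt_8_general (k l : ℕ → ℕ) (hlk : ∀ n, l n < k n)
    -- the universe is `(f,g)`-bounded with `f n = C(k n, l n)`, `g n = k n / l n`:
    (bounded : ∀ A : ℕ → Finset ℕ, (∀ n, (A n).card = (k n).choose (l n)) →
      ∃ B : {o : Ordinal // o < (Cardinal.aleph 1).ord} → ℕ → Finset ℕ,
        (∀ i n, B i n ⊆ A n) ∧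
        (∀ i, ∀ᶠ n in atTop, (B i n).card < k n / l n) ∧
        (∀ x : ℕ → ℕ, (∀ n, x n ∈ A n) → ∃ i, ∀ n, x n ∈ B i n))
    (F : Ultrafilter ℕ) :
    ¬ (∀ a : {o : Ordinal // o < (Cardinal.aleph 1).ord} → (n : ℕ) → Fin (k n),
        ∃ b : (n : ℕ) → Finset (Fin (k n)), (∀ n, (b n).card = l n) ∧
          ∀ i, {n : ℕ | a i n ∈ b n} ∈ F) := fun h => by
  have hk (n : ℕ) : 0 < k n := Nat.zero_lt_of_lt (hlk n)
  rcases F.le_cofinite_or_eq_pure with hF | ⟨n₀, rfl⟩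
  · obtain ⟨B, hB⟩ := bounded
      (fun n => (powersetCard (l n) univ).map (Encodable.encode' (Finset (Fin (k n))))) (by simp)
    obtain ⟨e⟩ := nonempty_equiv_lt_ord_aleph_one
    exact not_hasCommonNeighbours_of_le_cofinite hk hF (IsSmallCover.preimage _ hB)
      (HasCommonNeighbours.of_surjective h e.surjective)
  · exact not_hasCommonNeighbours_pure hk (hlk n₀) h

/-- Let `l n → ∞` and `k n / l n → ∞` (with `l n < k n`), set
`f(n) = C(k n, l n)` and `g(n) = k n / l n`. Suppose the universe is `(f,g)`-bounded.
Then for every ultrafilter `F` on `ℕ`, the ultraproduct `∏ Γ_{k n, l n} / F` is not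
ℵ₁-complete: it is not the case that every `ω₁`-indexed family of elements of the
`U`-part is linked to a single common element of the `V`-part. -/
theorem stmt_8 (k l : ℕ → ℕ) (hlk : ∀ n, l n < k n)
    (hl : Tendsto l atTop atTop)
    (hg : Tendsto (fun n => k n / l n) atTop atTop)
    -- the universe is `(f,g)`-bounded with `f n = C(k n, l n)`, `g n = k n / l n`:
    (bounded : ∀ A : ℕ → Finset ℕ, (∀ n, (A n).card = (k n).choose (l n)) →
      ∃ B : {o : Ordinal // o < (Cardinal.aleph 1).ord} → ℕ → Finset ℕ,
        (∀ i n, B i n ⊆ A n) ∧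
        (∀ i, ∀ᶠ n in atTop, (B i n).card < k n / l n) ∧
        (∀ x : ℕ → ℕ, (∀ n, x n ∈ A n) → ∃ i, ∀ n, x n ∈ B i n))
    (F : Ultrafilter ℕ) :
    ¬ (∀ a : {o : Ordinal // o < (Cardinal.aleph 1).ord} → (n : ℕ) → Fin (k n),
        ∃ b : (n : ℕ) → Finset (Fin (k n)), (∀ n, (b n).card = l n) ∧
          ∀ i, {n : ℕ | a i n ∈ b n} ∈ F) :=
  stmt_8_general k l hlk bounded F
end

section
/- Let T ⊆ ⋃_N ∏_{n<N} a_n be the full finitely-branching tree of sequences with n-th entry in the finite nonempty set a_n, equipped at each node of length n with an F₀(n)-additive logarithmic measure ‖·‖_n on a_n whose value on the full set a_n tends to infinity with n. If W ⊆ T and there is no subtree T' ≤* T all of whose branches meet W, then there is a subtree T' with T' ∩ W = ∅, T' ≤* T, obtained by removing at each node ν the successors lying in the 'promotable' set, and at each node the surviving successor set has measure ≥ ‖succ_T(ν)‖_ν − 1. -/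
/-!
Call a node promotable if some `≤*`-condition with that stem has all its
branches meeting `W`. Nodes of `W` are promotable, and so is every node with a large set of
promotable successors, by gluing the witnessing conditions. By the splitting property of the
measure, the non-promotable successors of a non-promotable node therefore form a large set; so if
the root is not promotable, the non-promotable nodes form the required tree.
-/

/-- `S` is a subtree of the full tree `T = ⋃_N ∏_{n<N} a n` of finite sequences whose
`n`-th entry lies in `a n`: it contains the root, its nodes are legal, and it is closed
under initial segments. -/
def IsTree (a : ℕ → Finset ℕ) (S : Set (List ℕ)) : Prop :=
  ([] ∈ S) ∧ (∀ l ∈ S, ∀ i : Fin l.length, l.get i ∈ a i) ∧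
    (∀ (l : List ℕ) (x : ℕ), l ++ [x] ∈ S → l ∈ S)

/-- The set of immediate successors of the node `l` in the tree `S`. -/
def Succs (S : Set (List ℕ)) (l : List ℕ) : Set ℕ := {x : ℕ | l ++ [x] ∈ S}

/-- `S ≤* T` for the full tree `T`: `S` is a subtree with no dead ends such that at
each node `l` of `S` the surviving successor set has measure at least
`‖succ_T(l)‖ − 1 = ‖a (length l)‖ − 1`. -/
def GoodSubtree (a : ℕ → Finset ℕ) (norm : ℕ → Set ℕ → ℕ) (S : Set (List ℕ)) : Prop :=
  IsTree a S ∧ (∀ l ∈ S, (Succs S l).Nonempty) ∧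
    ∀ l ∈ S, norm l.length (↑(a l.length)) - 1 ≤ norm l.length (Succs S l)

/-- `f : ℕ → ℕ` is a branch of `S`: all its initial segments are nodes of `S`. -/
def BranchIn (S : Set (List ℕ)) (f : ℕ → ℕ) : Prop :=
  ∀ n : ℕ, (List.ofFn fun i : Fin n => f i) ∈ S

/-- The finite sequences of the full tree, written with `List.get` so that it matches the second
clause of `IsTree`. -/
def Legal (a : ℕ → Finset ℕ) (l : List ℕ) : Prop :=
  ∀ i : Fin l.length, l.get i ∈ a i

/-- `A` is a successor set at level `n` that `≤*` allows: nonempty, of measure `≥ ‖a n‖ − 1`. -/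
def Large (a : ℕ → Finset ℕ) (norm : ℕ → Set ℕ → ℕ) (n : ℕ) (A : Set ℕ) : Prop :=
  A.Nonempty ∧ norm n ↑(a n) - 1 ≤ norm n A

/-- A condition with stem `l` that `≤*`-extends the full tree above `l`. -/
structure IsGoodCone (a : ℕ → Finset ℕ) (norm : ℕ → Set ℕ → ℕ) (l : List ℕ)
    (S : Set (List ℕ)) : Prop where
  stem_mem : l ∈ S
  stem_prefix : ∀ m ∈ S, l <+: m
  legal : ∀ m ∈ S, Legal a m
  mem_of_append : ∀ m x, m ++ [x] ∈ S → l <+: m → m ∈ S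
  large_succs : ∀ m ∈ S, Large a norm m.length (Succs S m)

/-- `l ∈ T^W` in the paper's notation. -/
def Promotable (a : ℕ → Finset ℕ) (norm : ℕ → Set ℕ → ℕ) (W : Set (List ℕ))
    (l : List ℕ) : Prop :=
  ∃ S, IsGoodCone a norm l S ∧ ∀ f : ℕ → ℕ,
    (∀ n, l.length ≤ n → (List.ofFn fun i : Fin n => f i) ∈ S) →
      ∃ n, (List.ofFn fun i : Fin n => f i) ∈ W

def nonPromotableTree (a : ℕ → Finset ℕ) (norm : ℕ → Set ℕ → ℕ) (W : Set (List ℕ)) :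
    Set (List ℕ) :=
  {m | Legal a m ∧ ∀ p, p <+: m → ¬ Promotable a norm W p}

section

variable {a : ℕ → Finset ℕ} {norm : ℕ → Set ℕ → ℕ} {W : Set (List ℕ)}

theorem legal_append_singleton {l : List ℕ} {x : ℕ} :
    Legal a (l ++ [x]) ↔ Legal a l ∧ x ∈ a l.length := by
  simp only [Legal, Fin.forall_iff, List.get_eq_getElem, List.length_append,
    List.length_singleton]
  constructor
  · intro h
    refine ⟨fun i hi => ?_, ?_⟩
    · simpa [List.getElem_append_left hi] using h i (by omega)
    · simpa using h l.length (by omega)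
  · rintro ⟨hl, hx⟩ i hi
    rcases Nat.lt_succ_iff_lt_or_eq.1 hi with hi | rfl
    · simpa [List.getElem_append_left hi] using hl i hi
    · simpa using hx

theorem eq_of_append_singleton_prefix_ofFn {l : List ℕ} {x n : ℕ} {f : ℕ → ℕ}
    (h : l ++ [x] <+: List.ofFn fun i : Fin n => f i) : x = f l.length := by
  have hlen : l.length < (l ++ [x]).length := by simp
  simpa using h.getElem hlen

theorem Large.mono (mono : ∀ n, ∀ x y : Set ℕ, x.Nonempty → x ⊆ y → y ⊆ ↑(a n) →
      norm n x ≤ norm n y)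
    {n : ℕ} {A B : Set ℕ} (hA : Large a norm n A) (hAB : A ⊆ B) (hB : B ⊆ ↑(a n)) :
    Large a norm n B :=
  ⟨hA.1.mono hAB, hA.2.trans (mono n A B hA.1 hAB hB)⟩

theorem Promotable.of_mem (ha : ∀ n, (a n).Nonempty) {l : List ℕ} (hl : Legal a l)
    (hW : l ∈ W) : Promotable a norm W l := by
  refine ⟨{m | l <+: m ∧ Legal a m}, ⟨⟨List.prefix_refl l, hl⟩, fun m hm => hm.1,
    fun m hm => hm.2, ?_, ?_⟩, ?_⟩
  · rintro m x ⟨-, hmx⟩ hlm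
    exact ⟨hlm, (legal_append_singleton.1 hmx).1⟩
  · rintro m ⟨hlm, hm⟩
    have hsuccs : Succs {m | l <+: m ∧ Legal a m} m = ↑(a m.length) := by
      ext x
      simp [Succs, legal_append_singleton, hm, hlm.trans (List.prefix_append m [x])]
    rw [hsuccs]
    exact ⟨Finset.coe_nonempty.2 (ha _), Nat.sub_le _ _⟩
  · intro f hf
    refine ⟨l.length, ?_⟩
    rw [← (hf l.length le_rfl).1.eq_of_length (by simp)]
    exact hW

/-- Gluing the witnessing cones above the nodes `l ++ [x]`, `x ∈ G`, gives one above `l`. -/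
theorem Promotable.of_large (mono : ∀ n, ∀ x y : Set ℕ, x.Nonempty → x ⊆ y → y ⊆ ↑(a n) →
      norm n x ≤ norm n y)
    {l : List ℕ} {G : Set ℕ} (hl : Legal a l)
    (hG : Large a norm l.length G) (hprom : ∀ x ∈ G, Promotable a norm W (l ++ [x])) :
    Promotable a norm W l := by
  choose! S hS hbranch using hprom
  set T : Set (List ℕ) := insert l (⋃ x ∈ G, S x)
  have hS_sub : ∀ x ∈ G, S x ⊆ T := fun x hx =>
    (Set.subset_biUnion_of_mem (u := S) hx).trans (Set.subset_insert _ _)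
  have hT_legal : ∀ m ∈ T, Legal a m := by
    rintro m (rfl | hm)
    · exact hl
    · obtain ⟨x, hx, hm⟩ := Set.mem_iUnion₂.1 hm
      exact (hS x hx).legal m hm
  have hsuccs_sub : ∀ m, Succs T m ⊆ ↑(a m.length) := fun m x hx =>
    (legal_append_singleton.1 (hT_legal _ hx)).2
  refine ⟨T, ⟨Set.mem_insert _ _, ?_, hT_legal, ?_, ?_⟩, ?_⟩
  · rintro m (rfl | hm)
    · exact List.prefix_refl _
    · obtain ⟨x, hx, hm⟩ := Set.mem_iUnion₂.1 hm
      exact (List.prefix_append l [x]).trans ((hS x hx).stem_prefix m hm)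
  · rintro m y (h | hm) hlm
    · exact absurd hlm.length_le (by rw [← h]; simp)
    · obtain ⟨x, hx, hm⟩ := Set.mem_iUnion₂.1 hm
      rcases List.prefix_concat_iff.1 ((hS x hx).stem_prefix _ hm) with h | h
      · rw [← (List.append_inj' h rfl).1]
        exact Set.mem_insert _ _
      · exact hS_sub x hx ((hS x hx).mem_of_append m y hm h)
  · rintro m (rfl | hm)
    · exact hG.mono mono (fun x hx => hS_sub x hx (hS x hx).stem_mem) (hsuccs_sub _)
    · obtain ⟨x, hx, hm⟩ := Set.mem_iUnion₂.1 hm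
      exact ((hS x hx).large_succs m hm).mono mono (fun y hy => hS_sub x hx hy)
        (hsuccs_sub _)
  · intro f hf
    -- above level `|l|` a branch of `T` stays in the cone chosen for its first step `f |l|`
    have hstep : ∀ n, l.length + 1 ≤ n →
        f l.length ∈ G ∧ (List.ofFn fun i : Fin n => f i) ∈ S (f l.length) := by
      intro n hn
      rcases hf n (by omega) with h | hm
      · exact absurd (congrArg List.length h) (by simp; omega)
      · obtain ⟨x, hx, hm⟩ := Set.mem_iUnion₂.1 hm
        obtain rfl := eq_of_append_singleton_prefix_ofFn ((hS x hx).stem_prefix _ hm)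
        exact ⟨hx, hm⟩
    exact hbranch _ (hstep _ le_rfl).1 f fun n hn => (hstep n (by simpa using hn)).2

theorem exists_goodSubtree_of_promotable_nil (h : Promotable a norm W []) :
    ∃ S : Set (List ℕ), GoodSubtree a norm S ∧
      ∀ f : ℕ → ℕ, BranchIn S f → ∃ n : ℕ, (List.ofFn fun i : Fin n => f i) ∈ W := by
  obtain ⟨S, hS, hbranch⟩ := h
  exact ⟨S, ⟨⟨hS.stem_mem, hS.legal, fun m x hm => hS.mem_of_append m x hm List.nil_prefix⟩,
    fun m hm => (hS.large_succs m hm).1, fun m hm => (hS.large_succs m hm).2⟩,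
    fun f hf => hbranch f fun n _ => hf n⟩

theorem succs_nonPromotableTree {m : List ℕ} (hm : m ∈ nonPromotableTree a norm W) :
    Succs (nonPromotableTree a norm W) m =
      {x | x ∈ a m.length ∧ ¬ Promotable a norm W (m ++ [x])} := by
  ext x
  simp only [Succs, nonPromotableTree, Set.mem_ofPred_eq, legal_append_singleton,
    List.prefix_concat_iff]
  constructor
  · rintro ⟨⟨-, hx⟩, hp⟩
    exact ⟨hx, hp _ (Or.inl rfl)⟩
  · rintro ⟨hx, hp⟩
    refine ⟨⟨hm.1, hx⟩, ?_⟩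
    rintro p (rfl | hpm)
    exacts [hp, hm.2 p hpm]

/-- The splitting property of the measure: the promotable successors cannot form a large set, so
the remaining ones do. -/
theorem large_succs_nonPromotableTree (ha : ∀ n, (a n).Nonempty)
    (mono : ∀ n, ∀ x y : Set ℕ, x.Nonempty → x ⊆ y → y ⊆ ↑(a n) →
      norm n x ≤ norm n y)
    (split : ∀ n, ∀ x x₁ x₂ : Set ℕ, x ⊆ ↑(a n) → x.Nonempty → x = x₁ ∪ x₂ →
      (x₁.Nonempty ∧ norm n x - 1 ≤ norm n x₁) ∨
      (x₂.Nonempty ∧ norm n x - 1 ≤ norm n x₂))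
    {m : List ℕ} (hm : m ∈ nonPromotableTree a norm W) :
    Large a norm m.length (Succs (nonPromotableTree a norm W) m) := by
  set n := m.length
  have hunion : (↑(a n) : Set ℕ) = {x | x ∈ a n ∧ Promotable a norm W (m ++ [x])} ∪
      {x | x ∈ a n ∧ ¬ Promotable a norm W (m ++ [x])} := by
    ext x
    simp only [Finset.mem_coe, Set.mem_union, Set.mem_ofPred_eq]
    tauto
  rw [succs_nonPromotableTree hm]
  rcases split n _ _ _ subset_rfl (Finset.coe_nonempty.2 (ha n)) hunion with hG | hH
  · exact absurd (Promotable.of_large mono hm.1 hG fun x hx => hx.2)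
      (hm.2 m (List.prefix_refl m))
  · exact hH

theorem goodSubtree_nonPromotableTree (ha : ∀ n, (a n).Nonempty)
    (mono : ∀ n, ∀ x y : Set ℕ, x.Nonempty → x ⊆ y → y ⊆ ↑(a n) →
      norm n x ≤ norm n y)
    (split : ∀ n, ∀ x x₁ x₂ : Set ℕ, x ⊆ ↑(a n) → x.Nonempty → x = x₁ ∪ x₂ →
      (x₁.Nonempty ∧ norm n x - 1 ≤ norm n x₁) ∨
      (x₂.Nonempty ∧ norm n x - 1 ≤ norm n x₂))
    (hnil : ¬ Promotable a norm W []) : GoodSubtree a norm (nonPromotableTree a norm W) := by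
  have hroot : [] ∈ nonPromotableTree a norm W :=
    ⟨fun i => i.elim0, fun p hp => List.prefix_nil.1 hp ▸ hnil⟩
  have hclosed : ∀ (m : List ℕ) (x : ℕ), m ++ [x] ∈ nonPromotableTree a norm W →
      m ∈ nonPromotableTree a norm W := fun m x hmx =>
    ⟨(legal_append_singleton.1 hmx.1).1,
      fun p hp => hmx.2 p (hp.trans (List.prefix_append m [x]))⟩
  exact ⟨⟨hroot, fun m hm => hm.1, hclosed⟩,
    fun m hm => (large_succs_nonPromotableTree ha mono split hm).1,
    fun m hm => (large_succs_nonPromotableTree ha mono split hm).2⟩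

theorem not_mem_of_mem_nonPromotableTree (ha : ∀ n, (a n).Nonempty) {m : List ℕ}
    (hm : m ∈ nonPromotableTree a norm W) : m ∉ W := fun hW =>
  hm.2 m (List.prefix_refl m) (Promotable.of_mem ha hm.1 hW)

end

theorem stmt_13_general (a : ℕ → Finset ℕ) (ha : ∀ n, (a n).Nonempty)
    (norm : ℕ → Set ℕ → ℕ)
    -- each `norm n` is a logarithmic measure on `a n`:
    (mono : ∀ n, ∀ x y : Set ℕ, x.Nonempty → x ⊆ y → y ⊆ ↑(a n) →
      norm n x ≤ norm n y)
    (split : ∀ n, ∀ x x₁ x₂ : Set ℕ, x ⊆ ↑(a n) → x.Nonempty → x = x₁ ∪ x₂ →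
      (x₁.Nonempty ∧ norm n x - 1 ≤ norm n x₁) ∨
      (x₂.Nonempty ∧ norm n x - 1 ≤ norm n x₂))
    (W : Set (List ℕ))
    -- there is no `T' ≤* T` all of whose branches meet `W`:
    (hno : ¬ ∃ S : Set (List ℕ), GoodSubtree a norm S ∧
      ∀ f : ℕ → ℕ, BranchIn S f → ∃ n : ℕ, (List.ofFn fun i : Fin n => f i) ∈ W) :
    ∃ S : Set (List ℕ), GoodSubtree a norm S ∧ ∀ l ∈ S, l ∉ W :=
  ⟨nonPromotableTree a norm W,
    goodSubtree_nonPromotableTree ha mono split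
      fun h => hno (exists_goodSubtree_of_promotable_nil h),
    fun _ => not_mem_of_mem_nonPromotableTree ha⟩

/-- Let `T` be the full finitely-branching tree of sequences with `n`-th
entry in the finite nonempty set `a n`, equipped at each level `n` with an
`F₀ n`-additive logarithmic measure `‖·‖_n` on `a n` whose value on the full set `a n`
tends to infinity with `n`. If `W ⊆ T` and there is no subtree `T' ≤* T` all of whose
branches meet `W`, then there is a subtree `T' ≤* T` with `T' ∩ W = ∅` (at each node
the surviving successor set having measure `≥ ‖a n‖ − 1`). -/
theorem stmt_13 (a : ℕ → Finset ℕ) (ha : ∀ n, (a n).Nonempty)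
    (F₀ : ℕ → ℕ) (norm : ℕ → Set ℕ → ℕ)
    -- each `norm n` is a logarithmic measure on `a n`:
    (mono : ∀ n, ∀ x y : Set ℕ, x.Nonempty → x ⊆ y → y ⊆ ↑(a n) →
      norm n x ≤ norm n y)
    (split : ∀ n, ∀ x x₁ x₂ : Set ℕ, x ⊆ ↑(a n) → x.Nonempty → x = x₁ ∪ x₂ →
      (x₁.Nonempty ∧ norm n x - 1 ≤ norm n x₁) ∨
      (x₂.Nonempty ∧ norm n x - 1 ≤ norm n x₂))
    -- `norm n` is `F₀ n`-additive:
    (additive : ∀ n, ∀ c : Fin (F₀ n) → Set ℕ, (⋃ i, c i) = ↑(a n) →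
      ∃ i, norm n (↑(a n)) - 1 ≤ norm n (c i))
    -- the measure of the full successor sets tends to infinity:
    (hinf : Filter.Tendsto (fun n => norm n (↑(a n))) Filter.atTop Filter.atTop)
    (W : Set (List ℕ))
    -- there is no `T' ≤* T` all of whose branches meet `W`:
    (hno : ¬ ∃ S : Set (List ℕ), GoodSubtree a norm S ∧
      ∀ f : ℕ → ℕ, BranchIn S f → ∃ n : ℕ, (List.ofFn fun i : Fin n => f i) ∈ W) :
    ∃ S : Set (List ℕ), GoodSubtree a norm S ∧ ∀ l ∈ S, l ∉ W :=
  stmt_13_general a ha norm mono split W hno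
end
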